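/- arXiv:1508.03282 — 5 statements merged into one kernel-verified Lean document; each statement's English description precedes it below -/
import Mathlib

section
/- Let q be a density family for L. Then for every t ≥ 0 and every (B_E ⊗ F_t)-measurable function f : E × Ω → [0,∞], one has E[ω ↦ f(L(ω), ω)] = ∫_E E[f(x, ·) q^x_t] λ(dx), both sides possibly being +∞. -/
open MeasureTheory Set
open scoped ENNReal NNReal

/-!
Both sides are integrals of `(x, ω) ↦ f x ω` against a measure on `E × Ω`: the joint law of
`(L, id)` on the left, and `(λ ⊗ P).withDensity q_t` on the right. On rectangles `B ×ˢ A` with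
`A ∈ F_t` these measures agree, because `P(L ∈ B, A) = ∫_A ν_t(B) dP = ∫_A ∫_B q^x_t dλ dP`
and Tonelli. Rectangles form a π-system generating `B_E ⊗ F_t`, so the two measures agree
on `B_E ⊗ F_t`, which is all that matters for a `(B_E ⊗ F_t)`-measurable integrand.
-/

section Rectangles

variable {E Ω : Type*} [MeasurableSpace E] {m mΩ : MeasurableSpace Ω}

lemma MeasurableSpace.prod_mono_right (hm : m ≤ mΩ) :
    (inferInstance : MeasurableSpace E).prod m ≤ (inferInstance : MeasurableSpace E).prod mΩ :=
  sup_le_sup le_rfl (MeasurableSpace.comap_mono hm)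

lemma trim_eq_of_apply_prod_eq (hm : m ≤ mΩ) {μ ν : Measure (E × Ω)} [IsFiniteMeasure μ]
    (h : ∀ B, MeasurableSet B → ∀ A, MeasurableSet[m] A → μ (B ×ˢ A) = ν (B ×ˢ A)) :
    μ.trim (MeasurableSpace.prod_mono_right hm) = ν.trim (MeasurableSpace.prod_mono_right hm) := by
  have hle := MeasurableSpace.prod_mono_right (E := E) hm
  have hrect : ∀ B, MeasurableSet B → ∀ A, MeasurableSet[m] A →
      μ.trim hle (B ×ˢ A) = ν.trim hle (B ×ˢ A) := fun B hB A hA => by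
    have hBA : MeasurableSet[(inferInstance : MeasurableSpace E).prod m] (B ×ˢ A) :=
      @MeasurableSet.prod E Ω _ m _ _ hB hA
    rw [trim_measurableSet_eq hle hBA, trim_measurableSet_eq hle hBA, h B hB A hA]
  have : IsFiniteMeasure (μ.trim hle) := isFiniteMeasure_trim hle
  refine @ext_of_generate_finite (E × Ω) ((inferInstance : MeasurableSpace E).prod m) _ _ _
    (@generateFrom_prod E Ω _ m).symm (@isPiSystem_prod E Ω _ m) _ ?_ ?_
  · rintro _ ⟨B, hB, A, hA, rfl⟩
    exact hrect B hB A hA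
  · simpa only [univ_prod_univ] using hrect univ .univ univ .univ

lemma lintegral_eq_of_apply_prod_eq (hm : m ≤ mΩ) {μ ν : Measure (E × Ω)} [IsFiniteMeasure μ]
    (h : ∀ B, MeasurableSet B → ∀ A, MeasurableSet[m] A → μ (B ×ˢ A) = ν (B ×ˢ A))
    {f : E × Ω → ℝ≥0∞} (hf : Measurable[(inferInstance : MeasurableSpace E).prod m] f) :
    ∫⁻ p, f p ∂μ = ∫⁻ p, f p ∂ν := by
  have hle := MeasurableSpace.prod_mono_right (E := E) hm
  rw [← lintegral_trim hle hf, ← lintegral_trim hle hf, trim_eq_of_apply_prod_eq hm h]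

end Rectangles

section Density

variable {E Ω : Type*} [MeasurableSpace E] {m mΩ : MeasurableSpace Ω}
  {lam : Measure E} {P : Measure Ω} [SFinite P] {g : E → Ω → ℝ≥0∞}

lemma withDensity_prod_apply_prod [SFinite lam] (hg : Measurable (Function.uncurry g))
    {B : Set E} {A : Set Ω} (hB : MeasurableSet B) (hA : MeasurableSet A) :
    (lam.prod P).withDensity (Function.uncurry g) (B ×ˢ A)
      = ∫⁻ x in B, ∫⁻ ω in A, g x ω ∂P ∂lam := by
  rw [withDensity_apply _ (hB.prod hA), setLIntegral_prod _ hg.aemeasurable]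
  rfl

lemma lintegral_withDensity_prod (hg : Measurable (Function.uncurry g))
    {f : E × Ω → ℝ≥0∞} (hf : Measurable f) :
    ∫⁻ p, f p ∂(lam.prod P).withDensity (Function.uncurry g)
      = ∫⁻ x, ∫⁻ ω, f (x, ω) * g x ω ∂P ∂lam := by
  rw [lintegral_withDensity_eq_lintegral_mul _ hg hf, lintegral_prod _ (hg.mul hf).aemeasurable]
  simp only [Pi.mul_apply, Function.uncurry_apply_pair, mul_comm]

lemma measure_preimage_inter_eq_of_condDensity [SFinite lam] {L : Ω → E}
    {ν : Ω → Measure E} (hg : Measurable (Function.uncurry g))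
    (hν_cond : ∀ B, MeasurableSet B → ∀ A, MeasurableSet[m] A →
      ∫⁻ ω in A, ν ω B ∂P = P (A ∩ L ⁻¹' B))
    (hν_dens : ∀ᵐ ω ∂P, ∀ B, MeasurableSet B → ν ω B = ∫⁻ x in B, g x ω ∂lam)
    {B : Set E} (hB : MeasurableSet B) {A : Set Ω} (hA : MeasurableSet[m] A) :
    P (L ⁻¹' B ∩ A) = ∫⁻ x in B, ∫⁻ ω in A, g x ω ∂P ∂lam :=
  calc P (L ⁻¹' B ∩ A)
      = ∫⁻ ω in A, ν ω B ∂P := by rw [inter_comm, hν_cond B hB A hA]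
    _ = ∫⁻ ω in A, ∫⁻ x in B, g x ω ∂lam ∂P :=
        lintegral_congr_ae (ae_restrict_of_ae (hν_dens.mono fun ω hω => hω B hB))
    _ = ∫⁻ x in B, ∫⁻ ω in A, g x ω ∂P ∂lam :=
        lintegral_lintegral_swap (hg.comp measurable_swap).aemeasurable

end Density

theorem density_family_expectation_formula_general
    {Ω : Type*} {mΩ : MeasurableSpace Ω} {P : Measure Ω} [IsProbabilityMeasure P]
    {E : Type*} [MeasurableSpace E]
    (F : Filtration ℝ≥0 mΩ)
    (L : Ω → E) (hL : Measurable L)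
    (lam : Measure E) (hlam : P.map L = lam)
    (ν : ℝ≥0 → Ω → Measure E)
    (hν_cond : ∀ (t : ℝ≥0) (B : Set E), MeasurableSet B →
      ∀ A : Set Ω, MeasurableSet[F t] A →
        ∫⁻ ω in A, ν t ω B ∂P = P (A ∩ L ⁻¹' B))
    (q : E → Ω → ℝ≥0 → ℝ)
    (hq_meas : Measurable fun p : E × Ω × ℝ≥0 => q p.1 p.2.1 p.2.2)
    (hq_dens : ∀ t : ℝ≥0, ∀ᵐ ω ∂P, ∀ B : Set E, MeasurableSet B →
      ν t ω B = ∫⁻ x in B, ENNReal.ofReal (q x ω t) ∂lam)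
    (t : ℝ≥0) (f : E → Ω → ℝ≥0∞)
    (hf : Measurable[(inferInstance : MeasurableSpace E).prod (F t)]
      fun p : E × Ω => f p.1 p.2) :
    ∫⁻ ω, f (L ω) ω ∂P = ∫⁻ x, ∫⁻ ω, f x ω * ENNReal.ofReal (q x ω t) ∂P ∂lam := by
  subst hlam
  set g : E → Ω → ℝ≥0∞ := fun x ω => ENNReal.ofReal (q x ω t)
  have hg : Measurable (Function.uncurry g) :=
    (hq_meas.comp (measurable_fst.prodMk (measurable_snd.prodMk measurable_const))).ennreal_ofReal
  have hLid : Measurable fun ω => (L ω, ω) := hL.prodMk measurable_id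
  have hf' := hf.mono (MeasurableSpace.prod_mono_right (F.le t)) le_rfl
  have hrect : ∀ B, MeasurableSet B → ∀ A, MeasurableSet[F t] A →
      P.map (fun ω => (L ω, ω)) (B ×ˢ A) = ((P.map L).prod P).withDensity (Function.uncurry g)
        (B ×ˢ A) := fun B hB A hA => by
    rw [Measure.map_apply hLid (hB.prod (F.le t A hA)),
      withDensity_prod_apply_prod hg hB (F.le t A hA),
      ← measure_preimage_inter_eq_of_condDensity hg (hν_cond t) (hq_dens t) hB hA]
    rfl
  calc ∫⁻ ω, f (L ω) ω ∂P
      = ∫⁻ p, f p.1 p.2 ∂P.map fun ω => (L ω, ω) := (lintegral_map hf' hLid).symm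
    _ = ∫⁻ p, f p.1 p.2 ∂((P.map L).prod P).withDensity (Function.uncurry g) :=
        lintegral_eq_of_apply_prod_eq (F.le t) hrect hf
    _ = _ := lintegral_withDensity_prod hg hf'

/-- Key disintegration formula: for every `t` and every
`(B_E ⊗ F_t)`-measurable nonnegative `f`, `E[f(L,·)] = ∫_E E[f(x,·) q^x_t] λ(dx)`. -/
theorem density_family_expectation_formula
    {Ω : Type*} {mΩ : MeasurableSpace Ω} {P : Measure Ω} [IsProbabilityMeasure P]
    {E : Type*} [MeasurableSpace E] [StandardBorelSpace E]
    (F : Filtration ℝ≥0 mΩ)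
    (hF_rc : ∀ t : ℝ≥0, F t = ⨅ (ε : ℝ≥0) (_ : 0 < ε), F (t + ε))
    (L : Ω → E) (hL : Measurable L)
    (lam : Measure E) (hlam : P.map L = lam)
    (ν : ℝ≥0 → Ω → Measure E)
    (hν_prob : ∀ (t : ℝ≥0) (ω : Ω), IsProbabilityMeasure (ν t ω))
    (hν_meas : ∀ (t : ℝ≥0) (B : Set E), MeasurableSet B →
      Measurable[F t] fun ω => ν t ω B)
    (hν_cond : ∀ (t : ℝ≥0) (B : Set E), MeasurableSet B →
      ∀ A : Set Ω, MeasurableSet[F t] A →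
        ∫⁻ ω in A, ν t ω B ∂P = P (A ∩ L ⁻¹' B))
    (q : E → Ω → ℝ≥0 → ℝ)
    (hq_meas : Measurable fun p : E × Ω × ℝ≥0 => q p.1 p.2.1 p.2.2)
    (hq_nonneg : ∀ x ω t, 0 ≤ q x ω t)
    (hq_rc : ∀ (x : E) (ω : Ω) (t : ℝ≥0),
      ContinuousWithinAt (fun s => q x ω s) (Set.Ici t) t)
    (hq_mart : ∀ x : E, Martingale (fun t ω => q x ω t) F P)
    (hq_dens : ∀ t : ℝ≥0, ∀ᵐ ω ∂P, ∀ B : Set E, MeasurableSet B →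
      ν t ω B = ∫⁻ x in B, ENNReal.ofReal (q x ω t) ∂lam)
    (t : ℝ≥0) (f : E → Ω → ℝ≥0∞)
    (hf : Measurable[(inferInstance : MeasurableSpace E).prod (F t)]
      fun p : E × Ω => f p.1 p.2) :
    ∫⁻ ω, f (L ω) ω ∂P = ∫⁻ x, ∫⁻ ω, f x ω * ENNReal.ofReal (q x ω t) ∂P ∂lam :=
  density_family_expectation_formula_general F L hL lam hlam ν hν_cond q hq_meas hq_dens t f hf
end

section
/- Suppose that F is right-continuous and P-complete (each F_t contains all P-null sets of 𝒜) and that Jacod's density hypothesis holds. Then the initially enlarged filtration G⁰ is right-continuous: for every t ≥ 0, F_t ⊔ σ(L) = ⋂_{ε>0} (F_{t+ε} ⊔ σ(L)); equivalently, G⁰_t = G_t for all t ≥ 0. -/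
/-!
Let `A` be `F_{t+ε} ⊔ σ(L)`-measurable for all `ε > 0`. As `F_s ⊔ σ(L)` is the pullback of
`F_s ⊗ 𝓑(E)` along the graph `ω ↦ (ω, L ω)`, a limsup of representatives yields one
`S ⊆ Ω × E` with `A = {ω | (ω, L ω) ∈ S}` and `S ∈ F_{t+1/(n+1)} ⊗ 𝓑(E)` for all `n`, so by
right-continuity every section `Sˣ = {ω | (ω, x) ∈ S}` is `F_t`-measurable. A version `g` of
`P(Sˣ | F_t)` that is jointly measurable in `(ω, x)` (built by a monotone class argument) is
a.s. equal to `1_{Sˣ}` for each `x`, so by Fubini `S` differs from `T = {g = 1} ∈ F_t ⊗ 𝓑(E)`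
by a `P ⊗ λ`-null set. On `F_s ⊗ 𝓑(E)` the law of `(ω, L ω)` is `P ⊗ ν_s`, which Jacod's
hypothesis makes absolutely continuous with respect to `P ⊗ λ`. Hence `A` differs from
`{ω | (ω, L ω) ∈ T} ∈ F_t ⊔ σ(L)` by a `P`-null set, which lies in `F_t` by completeness.
-/

open MeasureTheory Set ProbabilityTheory
open scoped ENNReal NNReal

section

variable {α β : Type*}

namespace MeasurableSpace

lemma prod_mono_left {m m' : MeasurableSpace α} (h : m ≤ m') (mβ : MeasurableSpace β) :
    m.prod mβ ≤ m'.prod mβ :=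
  sup_le_sup_right (comap_mono h) _

lemma sup_comap_eq_comap_prodMk (m : MeasurableSpace α) (mβ : MeasurableSpace β)
    (f : α → β) : m ⊔ mβ.comap f = (m.prod mβ).comap fun a => (a, f a) := by
  rw [MeasurableSpace.prod, comap_sup, comap_comp, comap_comp]
  exact congrArg (· ⊔ _) comap_id.symm

lemma iInf_comap_le_comap_iInf {m : ℕ → MeasurableSpace β} (hm : Antitone m) (f : α → β) :
    ⨅ n, (m n).comap f ≤ (⨅ n, m n).comap f := by
  intro A hA
  simp only [measurableSet_iInf, measurableSet_comap] at hA
  choose S hS hSA using hA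
  have hanti : Antitone fun n => ⋃ k, S (k + n) := fun i j hij =>
    iUnion_mono' fun k => ⟨k + (j - i), by rw [show k + (j - i) + i = k + j by omega]⟩
  refine measurableSet_comap.2 ⟨⋂ n, ⋃ k, S (k + n), measurableSet_iInf.2 fun N => ?_, ?_⟩
  · rw [← hanti.iInter_nat_add N]
    exact .iInter fun n => .iUnion fun k => hm (by omega) _ (hS (k + (n + N)))
  · simp only [preimage_iInter, preimage_iUnion, hSA, iUnion_const, iInter_const]

end MeasurableSpace

lemma Monotone.iInf_pos_add_eq_iInf_nat {γ : Type*} [CompleteLattice γ] {g : ℝ≥0 → γ}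
    (hg : Monotone g) (t : ℝ≥0) :
    ⨅ (ε : ℝ≥0) (_ : 0 < ε), g (t + ε) = ⨅ n : ℕ, g (t + (n + 1 : ℝ≥0)⁻¹) := by
  refine le_antisymm (le_iInf fun n => iInf₂_le _ (by positivity)) (le_iInf₂ fun ε hε => ?_)
  obtain ⟨n, hn⟩ := exists_nat_one_div_lt hε
  exact iInf_le_of_le n (hg (by simpa using hn.le))

lemma Monotone.iInf_pos_add_sup_comap_le [mβ : MeasurableSpace β]
    {m : ℝ≥0 → MeasurableSpace α} (hm : Monotone m) (f : α → β) (t : ℝ≥0) :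
    ⨅ (ε : ℝ≥0) (_ : 0 < ε), (m (t + ε) ⊔ mβ.comap f) ≤
      (⨅ n : ℕ, (m (t + (n + 1 : ℝ≥0)⁻¹)).prod mβ).comap fun a => (a, f a) := calc
  _ = ⨅ n : ℕ, (m (t + (n + 1 : ℝ≥0)⁻¹) ⊔ mβ.comap f) :=
    Monotone.iInf_pos_add_eq_iInf_nat (fun _ _ h => sup_le_sup_right (hm h) _) t
  _ ≤ _ := by
    simp_rw [MeasurableSpace.sup_comap_eq_comap_prodMk]
    exact MeasurableSpace.iInf_comap_le_comap_iInf
      (fun i j hij => MeasurableSpace.prod_mono_left (hm (by gcongr)) mβ) _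

lemma MeasurableSet.preimage_prodMk_right_of_iInf_prod [mβ : MeasurableSpace β] {ι : Sort*}
    {m : ι → MeasurableSpace α} {S : Set (α × β)} (hS : MeasurableSet[⨅ i, (m i).prod mβ] S)
    (y : β) : MeasurableSet[⨅ i, m i] ((·, y) ⁻¹' S) :=
  MeasurableSpace.measurableSet_iInf.2 fun i =>
    @measurable_prodMk_right _ _ (m i) mβ y _ (MeasurableSpace.measurableSet_iInf.1 hS i)

section ConditionalProbabilityOfSections

variable {m : MeasurableSpace α} [mα : MeasurableSpace α] [mβ : MeasurableSpace β]
  (hm : m ≤ mα) (P : Measure α) [IsFiniteMeasure P]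
include hm

lemma ae_le_one_of_setLIntegral_le_measure {f : α → ℝ≥0∞} (hf : Measurable[m] f)
    (h : ∀ V, MeasurableSet[m] V → ∫⁻ a in V, f a ∂P ≤ P V) : ∀ᵐ a ∂P, f a ≤ 1 := by
  refine ae_of_ae_trim hm (ae_le_of_forall_setLIntegral_le_of_sigmaFinite (m0 := m)
    (μ := P.trim hm) hf fun V hV _ => ?_)
  rw [setLIntegral_trim hm hf hV, setLIntegral_one, trim_measurableSet_eq hm hV]
  exact h V hV

lemma exists_measurable_setLIntegral_eq_measure_inter_section {S : Set (α × β)}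
    (hS : MeasurableSet S) :
    ∃ g : α × β → ℝ≥0∞, Measurable[m.prod mβ] g ∧
      ∀ y V, MeasurableSet[m] V → ∫⁻ a in V, g (a, y) ∂P = P (V ∩ (·, y) ⁻¹' S) := by
  have hfst : Measurable[m.prod mβ, m] Prod.fst := @measurable_fst _ _ m mβ
  have hsnd : Measurable[m.prod mβ] Prod.snd := @measurable_snd _ _ m mβ
  have hsec {g : α × β → ℝ≥0∞} (hg : Measurable[m.prod mβ] g) (y : β) :
      Measurable[m] fun a => g (a, y) := hg.comp (@measurable_prodMk_right _ _ m mβ y)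
  induction S, hS using MeasurableSpace.induction_on_inter generateFrom_prod.symm isPiSystem_prod
    with
  | empty => exact ⟨0, measurable_const, by simp⟩
  | basic _ hUB =>
    obtain ⟨U, hU, B, hB, rfl⟩ := hUB
    refine ⟨fun p => B.indicator 1 p.2 * P⁻[U.indicator 1|m] p.1,
      ((measurable_one.indicator hB).comp hsnd).mul ((measurable_condLExp m P _).comp hfst),
      fun y V hV => ?_⟩
    change ∫⁻ a in V, B.indicator 1 y * P⁻[U.indicator 1|m] a ∂P = _
    rw [lintegral_const_mul _ (measurable_condLExp' m P _),
      setLIntegral_condLExp hm P _ hV, lintegral_indicator_one hU, Measure.restrict_apply hU,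
      inter_comm]
    by_cases hy : y ∈ B <;> simp [hy]
  | compl S hS ih =>
    obtain ⟨g, hg, hgS⟩ := ih
    refine ⟨fun p => 1 - g p, measurable_const.sub hg, fun y V hV => ?_⟩
    have hle : ∀ᵐ a ∂P, g (a, y) ≤ 1 :=
      ae_le_one_of_setLIntegral_le_measure hm P (hsec hg y) fun W hW =>
        (hgS y W hW).trans_le (measure_mono inter_subset_left)
    have hSy : MeasurableSet ((·, y) ⁻¹' S) := measurable_prodMk_right hS
    rw [lintegral_sub ((hsec hg y).mono hm le_rfl)
        ((hgS y V hV).trans_lt (measure_lt_top _ _)).ne (ae_restrict_of_ae hle),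
      setLIntegral_one, hgS y V hV, preimage_compl, ← sdiff_eq, ← sdiff_self_inter,
      measure_sdiff inter_subset_left ((hm V hV).inter hSy).nullMeasurableSet
        (measure_ne_top _ _)]
  | iUnion S hdisj hS ih =>
    choose g hg hgS using ih
    refine ⟨fun p => ∑' n, g n p, by let := m.prod mβ; exact .tsum hg, fun y V hV => ?_⟩
    rw [lintegral_tsum fun n => ((hsec (hg n) y).mono hm le_rfl).aemeasurable,
      preimage_iUnion, inter_iUnion, measure_iUnion]
    · exact tsum_congr fun n => hgS n y V hV
    · exact fun i j hij => ((hdisj hij).preimage _).mono inter_subset_right inter_subset_right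
    · exact fun n => (hm V hV).inter (measurable_prodMk_right (hS n))

theorem exists_measurableSet_prod_ae_eq_of_forall_measurableSet_section (μ : Measure β)
    [SFinite μ] {S : Set (α × β)} (hS : MeasurableSet S)
    (hsec : ∀ y, MeasurableSet[m] ((·, y) ⁻¹' S)) :
    ∃ T, MeasurableSet[m.prod mβ] T ∧ S =ᵐ[P.prod μ] T := by
  obtain ⟨g, hg, hgS⟩ := exists_measurable_setLIntegral_eq_measure_inter_section hm P hS
  have hg' : Measurable g := hg.mono (MeasurableSpace.prod_mono_left hm mβ) le_rfl
  have hind : Measurable (S.indicator 1 : α × β → ℝ≥0∞) := measurable_one.indicator hS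
  have hsec_ae : ∀ y, ∀ᵐ a ∂P, g (a, y) = S.indicator 1 (a, y) := fun y => by
    have hgy : Measurable[m] fun a => g (a, y) := hg.comp (@measurable_prodMk_right _ _ m mβ y)
    have hSy : Measurable[m] (((·, y) ⁻¹' S).indicator 1 : α → ℝ≥0∞) :=
      measurable_const.indicator (hsec y)
    have := ae_eq_condLExp hm P (((·, y) ⁻¹' S).indicator 1) hgy fun V hV => by
      rw [hgS y V hV, lintegral_indicator_one (hm _ (hsec y)),
        Measure.restrict_apply (hm _ (hsec y)), inter_comm]
    rwa [condLExp_eq_self hm P hSy] at this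
  have hae : ∀ᵐ p ∂P.prod μ, g p = S.indicator 1 p :=
    (Measure.ae_prod_iff_ae_ae (measurableSet_eq_fun hg' hind)).2 <|
      (Measure.ae_ae_comm (p := fun a y => g (a, y) = S.indicator 1 (a, y))
        (measurableSet_eq_fun hg' hind)).2 (ae_of_all _ hsec_ae)
  refine ⟨g ⁻¹' {1}, hg (measurableSet_singleton 1), ?_⟩
  filter_upwards [hae] with p hp
  change (p ∈ S) = (g p = 1)
  by_cases hpS : p ∈ S <;> simp [hpS, hp]

end ConditionalProbabilityOfSections

section GraphLaw

variable {m : MeasurableSpace α} [mα : MeasurableSpace α] [mβ : MeasurableSpace β]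
  (hm : m ≤ mα) (P : Measure α) [IsFiniteMeasure P] {L : α → β} (hL : Measurable L)
  (κ : Kernel α β) [IsSFiniteKernel κ]
  (hκ : ∀ A, MeasurableSet[m] A → ∀ B, MeasurableSet B → ∫⁻ a in A, κ a B ∂P = P (A ∩ L ⁻¹' B))
include hm hL hκ

lemma measure_preimage_prodMk_eq_compProd {D : Set (α × β)}
    (hD : MeasurableSet[m.prod mβ] D) : P ((fun a => (a, L a)) ⁻¹' D) = (P ⊗ₘ κ) D := by
  have hgraph : Measurable fun a => (a, L a) := measurable_id.prodMk hL
  have hrect : ∀ A, MeasurableSet[m] A → ∀ B, MeasurableSet B →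
      P.map (fun a => (a, L a)) (A ×ˢ B) = (P ⊗ₘ κ) (A ×ˢ B) := fun A hA B hB => by
    rw [Measure.map_apply hgraph ((hm A hA).prod hB), Measure.compProd_apply_prod (hm A hA) hB,
      hκ A hA B hB]
    rfl
  rw [← Measure.map_apply hgraph (MeasurableSpace.prod_mono_left hm mβ _ hD)]
  refine ext_on_measurableSpace_of_generate_finite _ _ ?_ (MeasurableSpace.prod_mono_left hm mβ)
    (@generateFrom_prod _ _ m mβ).symm (@isPiSystem_prod _ _ m mβ) ?_ hD
  · rintro _ ⟨A, hA, B, hB, rfl⟩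
    exact hrect A hA B hB
  · simpa using hrect univ MeasurableSet.univ univ MeasurableSet.univ

lemma preimage_prodMk_ae_eq_of_ae_eq_prod (μ : Measure β) [SFinite μ] (hκμ : ∀ᵐ a ∂P, κ a ≪ μ)
    {S T : Set (α × β)} (hS : MeasurableSet[m.prod mβ] S) (hT : MeasurableSet[m.prod mβ] T)
    (hST : S =ᵐ[P.prod μ] T) :
    (fun a => (a, L a)) ⁻¹' S =ᵐ[P] (fun a => (a, L a)) ⁻¹' T := by
  rw [← measure_symmDiff_eq_zero_iff, ← preimage_symmDiff,
    measure_preimage_prodMk_eq_compProd hm P hL κ hκ (hS.symmDiff hT)]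
  refine Measure.AbsolutelyContinuous.compProd_right (η := Kernel.const α μ) hκμ ?_
  rw [Measure.compProd_const]
  exact measure_symmDiff_eq_zero_iff.2 hST

end GraphLaw

lemma measurableSet_of_ae_eq_of_forall_measure_eq_zero {m : MeasurableSpace α}
    [MeasurableSpace α] {P : Measure α} (hnull : ∀ s, P s = 0 → MeasurableSet[m] s) {A A' : Set α}
    (hA' : MeasurableSet[m] A') (h : A =ᵐ[P] A') : MeasurableSet[m] A := by
  rw [← symmDiff_symmDiff_cancel_left A' A]
  exact hA'.symmDiff (hnull _ (measure_symmDiff_eq_zero_iff.2 h.symm))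

end

theorem initially_enlarged_right_continuous_general
    {Ω : Type*} {mΩ : MeasurableSpace Ω} {P : Measure Ω} [IsProbabilityMeasure P]
    {E : Type*} [MeasurableSpace E]
    (F : Filtration ℝ≥0 mΩ)
    (hF_rc : ∀ t : ℝ≥0, F t = ⨅ (ε : ℝ≥0) (_ : 0 < ε), F (t + ε))
    (L : Ω → E) (hL : Measurable L)
    (lam : Measure E) (hlam : P.map L = lam)
    (ν : ℝ≥0 → Ω → Measure E)
    (hν_prob : ∀ (t : ℝ≥0) (ω : Ω), IsProbabilityMeasure (ν t ω))
    (hν_meas : ∀ (t : ℝ≥0) (B : Set E), MeasurableSet B →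
      Measurable[F t] fun ω => ν t ω B)
    (hν_cond : ∀ (t : ℝ≥0) (B : Set E), MeasurableSet B →
      ∀ A : Set Ω, MeasurableSet[F t] A →
        ∫⁻ ω in A, ν t ω B ∂P = P (A ∩ L ⁻¹' B))
    (hF_complete : ∀ (t : ℝ≥0) (s : Set Ω), P s = 0 → MeasurableSet[F t] s)
    (hJacod : ∀ t : ℝ≥0, ∀ᵐ ω ∂P, ν t ω ≪ lam) :
    ∀ t : ℝ≥0,
      F t ⊔ MeasurableSpace.comap L inferInstance =
        ⨅ (ε : ℝ≥0) (_ : 0 < ε),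
          (F (t + ε) ⊔ MeasurableSpace.comap L inferInstance) := by
  intro t
  have : IsProbabilityMeasure lam := hlam ▸ Measure.isProbabilityMeasure_map hL.aemeasurable
  have hF : Monotone F := fun _ _ h => F.mono h
  refine le_antisymm (le_iInf₂ fun ε _ => sup_le_sup_right (F.mono le_self_add) _) fun A hA => ?_
  obtain ⟨S, hS, rfl⟩ :=
    MeasurableSpace.measurableSet_comap.1 (hF.iInf_pos_add_sup_comap_le L t A hA)
  have hS₁ : MeasurableSet[(F (t + 1)).prod ‹_›] S := by
    have := MeasurableSpace.measurableSet_iInf.1 hS 0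
    rwa [Nat.cast_zero, zero_add, inv_one] at this
  have hsec : ∀ x, MeasurableSet[F t] ((·, x) ⁻¹' S) := fun x => by
    rw [hF_rc t, hF.iInf_pos_add_eq_iInf_nat t]
    exact hS.preimage_prodMk_right_of_iInf_prod x
  obtain ⟨T, hT, hST⟩ := exists_measurableSet_prod_ae_eq_of_forall_measurableSet_section (F.le t) P
    lam (MeasurableSpace.prod_mono_left (F.le _) _ _ hS₁) hsec
  let κ : Kernel Ω E := ⟨ν (t + 1), Measure.measurable_of_measurable_coe _ fun B hB =>
    (hν_meas (t + 1) B hB).mono (F.le _) le_rfl⟩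
  have : IsMarkovKernel κ := ⟨hν_prob (t + 1)⟩
  have hAT := preimage_prodMk_ae_eq_of_ae_eq_prod (F.le (t + 1)) P hL κ
    (fun A hA B hB => hν_cond (t + 1) B hB A hA) lam (hJacod (t + 1)) hS₁
    (MeasurableSpace.prod_mono_left (F.mono le_self_add) _ _ hT) hST
  refine measurableSet_of_ae_eq_of_forall_measure_eq_zero
    (m := F t ⊔ MeasurableSpace.comap L _)
    (fun N hN => le_sup_left (a := F t) _ (hF_complete t N hN)) ?_ hAT
  rw [MeasurableSpace.sup_comap_eq_comap_prodMk]
  exact ⟨T, hT, rfl⟩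

/-- If `F` is right-continuous and `P`-complete and Jacod's density
hypothesis holds, then the initially enlarged filtration `G⁰_t = F_t ⊔ σ(L)` is
right-continuous. -/
theorem initially_enlarged_right_continuous
    {Ω : Type*} {mΩ : MeasurableSpace Ω} {P : Measure Ω} [IsProbabilityMeasure P]
    {E : Type*} [MeasurableSpace E] [StandardBorelSpace E]
    (F : Filtration ℝ≥0 mΩ)
    (hF_rc : ∀ t : ℝ≥0, F t = ⨅ (ε : ℝ≥0) (_ : 0 < ε), F (t + ε))
    (L : Ω → E) (hL : Measurable L)
    (lam : Measure E) (hlam : P.map L = lam)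
    (ν : ℝ≥0 → Ω → Measure E)
    (hν_prob : ∀ (t : ℝ≥0) (ω : Ω), IsProbabilityMeasure (ν t ω))
    (hν_meas : ∀ (t : ℝ≥0) (B : Set E), MeasurableSet B →
      Measurable[F t] fun ω => ν t ω B)
    (hν_cond : ∀ (t : ℝ≥0) (B : Set E), MeasurableSet B →
      ∀ A : Set Ω, MeasurableSet[F t] A →
        ∫⁻ ω in A, ν t ω B ∂P = P (A ∩ L ⁻¹' B))
    (hF_complete : ∀ (t : ℝ≥0) (s : Set Ω), P s = 0 → MeasurableSet[F t] s)
    (hJacod : ∀ t : ℝ≥0, ∀ᵐ ω ∂P, ν t ω ≪ lam) :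
    ∀ t : ℝ≥0,
      F t ⊔ MeasurableSpace.comap L inferInstance =
        ⨅ (ε : ℝ≥0) (_ : 0 < ε),
          (F (t + ε) ⊔ MeasurableSpace.comap L inferInstance) :=
  initially_enlarged_right_continuous_general F hF_rc L hL lam hlam ν hν_prob hν_meas hν_cond
    hF_complete hJacod
end

section
/- Suppose that F is right-continuous and P-complete and that Jacod's density hypothesis holds. Let Z = (Z_t)_{t≥0} be a real-valued G-adapted process all of whose paths are right-continuous. Then there exists a jointly measurable function z : E × Ω × [0,∞) → ℝ such that for every x ∈ E the process (z^x_t)_{t≥0} is F-progressively measurable, and for every t ≥ 0, Z_t = z^{L}_t P-a.s. -/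
/-!
At a dyadic time `τ` of mesh `2⁻ⁿ`, `Z_τ` is measurable for `F_{τ+2⁻ⁿ} ∨ σ(L)`, so by the
Doob–Dynkin lemma `Z_τ = g(L, ·)` with `g` measurable for `B_E ⊗ F_{τ+2⁻ⁿ}`. Let `z^x_t` be the
`limsup` over `n` of `g(x, ·)` taken at the first dyadic time of mesh `2⁻ⁿ` after `t`; right-continuity
of `Z` gives `Z_t = z^L_t`. The `n`-th approximant looks at most `2 · 2⁻ⁿ` into the future, so
right-continuity of `F` makes `z^x` adapted, and replacing the approximants near the horizon `u` by
`z^x_u` shows that `z^x` is progressive.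
-/

open MeasureTheory Set Filter
open scoped NNReal Topology

namespace JacodParametrization

lemma exists_eq_comp_prodMk_of_measurable_sup_comap {Ω E : Type*} [mE : MeasurableSpace E]
    {m : MeasurableSpace Ω} {L : Ω → E} {f : Ω → ℝ} (hf : Measurable[m ⊔ mE.comap L] f) :
    ∃ h : E × Ω → ℝ, Measurable[mE.prod m] h ∧ ∀ ω, f ω = h (L ω, ω) := by
  have hf' : Measurable[(mE.prod m).comap fun ω => (L ω, id ω)] f := by
    rwa [MeasurableSpace.comap_prodMk, MeasurableSpace.comap_id, sup_comm]
  obtain ⟨h, hh, rfl⟩ := hf'.exists_eq_measurable_comp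
  exact ⟨h, hh, fun _ => rfl⟩

lemma measurable_comp_of_measurable_index {α β ι : Type*} {mα : MeasurableSpace α}
    [MeasurableSpace β] [MeasurableSpace ι] [Countable ι] [MeasurableSingletonClass ι]
    {f : ι → α → β} {i : α → ι} (hf : ∀ k, Measurable (f k)) (hi : Measurable i) :
    Measurable fun a => f (i a) a :=
  (measurable_from_prod_countable_left (f := fun q : α × ι => f q.2 q.1) hf).comp
    (measurable_id.prodMk hi)

lemma measurable_limsup_of_eventually {α β : Type*} {mα : MeasurableSpace α}
    [ConditionallyCompleteLinearOrder β] [TopologicalSpace β] [OrderTopology β]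
    [SecondCountableTopology β] [MeasurableSpace β] [BorelSpace β] {f : ℕ → α → β}
    (hf : ∀ᶠ n in atTop, Measurable (f n)) :
    Measurable fun a => limsup (fun n => f n a) atTop := by
  obtain ⟨m, hm⟩ := hf.exists_forall_of_atTop
  have hshift : (fun a => limsup (fun n => f n a) atTop)
      = fun a => limsup (fun n => f (n + m) a) atTop :=
    funext fun a => (limsup_nat_add (fun n => f n a) m).symm
  rw [hshift]
  exact Measurable.limsup fun n => hm _ (Nat.le_add_left m n)

section DyadicGrid

noncomputable def dyadicMesh (n : ℕ) : ℝ≥0 := (2 ^ n)⁻¹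

noncomputable def dyadicPoint (n k : ℕ) : ℝ≥0 := k * dyadicMesh n

noncomputable def dyadicIndex (n : ℕ) (t : ℝ≥0) : ℕ := ⌈t * 2 ^ n⌉₊

lemma dyadicMesh_pos (n : ℕ) : 0 < dyadicMesh n := by
  unfold dyadicMesh; positivity

lemma tendsto_dyadicMesh : Tendsto dyadicMesh atTop (𝓝 0) := by
  show Tendsto (fun n : ℕ => ((2 : ℝ≥0) ^ n)⁻¹) atTop (𝓝 0)
  simpa only [inv_pow] using
    NNReal.tendsto_pow_atTop_nhds_zero_of_lt_one (inv_lt_one_of_one_lt₀ one_lt_two)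

lemma measurable_dyadicIndex (n : ℕ) : Measurable (dyadicIndex n) :=
  Nat.measurable_ceil.comp (measurable_id.mul_const _)

lemma le_dyadicPoint_dyadicIndex (n : ℕ) (t : ℝ≥0) : t ≤ dyadicPoint n (dyadicIndex n t) := by
  rw [dyadicPoint, dyadicIndex, dyadicMesh, ← div_eq_mul_inv, le_div_iff₀ (by positivity)]
  exact Nat.le_ceil _

lemma dyadicPoint_dyadicIndex_le (n : ℕ) (t : ℝ≥0) :
    dyadicPoint n (dyadicIndex n t) ≤ t + dyadicMesh n := by
  rw [dyadicPoint, dyadicIndex, dyadicMesh, ← div_eq_mul_inv, div_le_iff₀ (by positivity),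
    add_mul, inv_mul_cancel₀ (by positivity)]
  exact (Nat.ceil_lt_add_one zero_le).le

lemma tendsto_dyadicPoint_dyadicIndex (t : ℝ≥0) :
    Tendsto (fun n => dyadicPoint n (dyadicIndex n t)) atTop (𝓝[≥] t) := by
  refine tendsto_nhdsWithin_iff.2 ⟨?_, .of_forall fun n => le_dyadicPoint_dyadicIndex n t⟩
  refine tendsto_of_tendsto_of_tendsto_of_le_of_le tendsto_const_nhds ?_
    (le_dyadicPoint_dyadicIndex · t) (dyadicPoint_dyadicIndex_le · t)
  simpa using tendsto_const_nhds.add tendsto_dyadicMesh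

lemma eventually_dyadicPoint_dyadicIndex_add_le {t u : ℝ≥0} (htu : t < u) :
    ∀ᶠ n in atTop, dyadicPoint n (dyadicIndex n t) + dyadicMesh n ≤ u := by
  have hlim : Tendsto (fun n => t + (dyadicMesh n + dyadicMesh n)) atTop (𝓝 t) := by
    simpa using tendsto_const_nhds.add (tendsto_dyadicMesh.add tendsto_dyadicMesh)
  filter_upwards [hlim.eventually (gt_mem_nhds htu)] with n hn
  calc dyadicPoint n (dyadicIndex n t) + dyadicMesh n
      ≤ t + dyadicMesh n + dyadicMesh n := by gcongr; exact dyadicPoint_dyadicIndex_le n t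
    _ ≤ u := by rw [add_assoc]; exact hn.le

end DyadicGrid

/-- `w n k` plays the role of the process at the dyadic time `dyadicPoint n k`. -/
noncomputable def dyadicLimsup {Ω : Type*} (w : ℕ → ℕ → Ω → ℝ) (t : ℝ≥0) (ω : Ω) : ℝ :=
  limsup (fun n => w n (dyadicIndex n t) ω) atTop

lemma measurable_dyadicLimsup {Ω : Type*} [MeasurableSpace Ω] {w : ℕ → ℕ → Ω → ℝ}
    (hw : ∀ n k, Measurable (w n k)) :
    Measurable fun p : ℝ≥0 × Ω => dyadicLimsup w p.1 p.2 :=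
  Measurable.limsup fun n => measurable_comp_of_measurable_index
    (fun k => (hw n k).comp measurable_snd) ((measurable_dyadicIndex n).comp measurable_fst)

section Filtration

variable {Ω : Type*} {mΩ : MeasurableSpace Ω} {F : Filtration ℝ≥0 mΩ} {w : ℕ → ℕ → Ω → ℝ}

lemma adapted_dyadicLimsup (hF : ∀ t : ℝ≥0, F t = ⨅ (ε : ℝ≥0) (_ : 0 < ε), F (t + ε))
    (hw : ∀ n k, Measurable[F (dyadicPoint n k + dyadicMesh n)] (w n k)) :
    Adapted F (dyadicLimsup w) := by
  intro t B hB
  rw [hF t]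
  refine MeasurableSpace.measurableSet_iInf.2 fun ε =>
    MeasurableSpace.measurableSet_iInf.2 fun hε => ?_
  have hmeas : Measurable[F (t + ε)] (dyadicLimsup w t) := by
    refine measurable_limsup_of_eventually ?_
    filter_upwards [eventually_dyadicPoint_dyadicIndex_add_le (lt_add_of_pos_right t hε)]
      with n hn
    exact (hw n _).mono (F.mono hn) le_rfl
  exact hmeas hB

lemma isProgressive_dyadicLimsup (hF : ∀ t : ℝ≥0, F t = ⨅ (ε : ℝ≥0) (_ : 0 < ε), F (t + ε))
    (hw : ∀ n k, Measurable[F (dyadicPoint n k + dyadicMesh n)] (w n k)) :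
    IsProgressive F (dyadicLimsup w) := by
  intro u
  have hzu := adapted_dyadicLimsup hF hw u
  -- Approximants that would look past the horizon `u` are replaced by the `F u`-measurable value
  -- at time `u`.
  let Y (n : ℕ) (p : Iic u × Ω) : ℝ :=
    if dyadicPoint n (dyadicIndex n p.1) + dyadicMesh n ≤ u then w n (dyadicIndex n p.1) p.2
    else dyadicLimsup w u p.2
  have hY (n : ℕ) : Measurable[Subtype.instMeasurableSpace.prod (F u)] (Y n) := by
    refine measurable_comp_of_measurable_index (f := fun k (p : Iic u × Ω) =>
      if dyadicPoint n k + dyadicMesh n ≤ u then w n k p.2 else dyadicLimsup w u p.2)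
      (fun k => ?_) ((measurable_dyadicIndex n).comp (measurable_subtype_coe.comp measurable_fst))
    by_cases hk : dyadicPoint n k + dyadicMesh n ≤ u
    · simp only [if_pos hk]
      exact ((hw n k).mono (F.mono hk) le_rfl).comp measurable_snd
    · simp only [if_neg hk]
      exact hzu.comp measurable_snd
  have hlimsup : (fun p : Iic u × Ω => dyadicLimsup w p.1 p.2)
      = fun p => limsup (fun n => Y n p) atTop := by
    funext ⟨⟨t, ht⟩, ω⟩
    rcases (mem_Iic.1 ht).lt_or_eq with htu | rfl
    · exact limsup_congr ((eventually_dyadicPoint_dyadicIndex_add_le htu).mono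
        fun n hn => (if_pos hn).symm)
    · have hbeyond (n : ℕ) : ¬ dyadicPoint n (dyadicIndex n t) + dyadicMesh n ≤ t :=
        not_le.2 (lt_add_of_le_of_pos (le_dyadicPoint_dyadicIndex n t) (dyadicMesh_pos n))
      simp only [Y, if_neg (hbeyond _), limsup_const]
  rw [hlimsup]
  exact Measurable.limsup hY

end Filtration

end JacodParametrization

open JacodParametrization

theorem G_adapted_process_parametrization_general
    {Ω : Type*} {mΩ : MeasurableSpace Ω} {P : Measure Ω}
    {E : Type*} [MeasurableSpace E]
    (F : Filtration ℝ≥0 mΩ)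
    (hF_rc : ∀ t : ℝ≥0, F t = ⨅ (ε : ℝ≥0) (_ : 0 < ε), F (t + ε))
    (L : Ω → E)
    (Z : ℝ≥0 → Ω → ℝ)
    (hZ_adapted : ∀ t : ℝ≥0,
      Measurable[⨅ (ε : ℝ≥0) (_ : 0 < ε),
        (F (t + ε) ⊔ MeasurableSpace.comap L inferInstance)] (Z t))
    (hZ_rc : ∀ (ω : Ω) (t : ℝ≥0),
      ContinuousWithinAt (fun s => Z s ω) (Set.Ici t) t) :
    ∃ z : E → Ω → ℝ≥0 → ℝ,
      Measurable (fun p : E × Ω × ℝ≥0 => z p.1 p.2.1 p.2.2) ∧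
      (∀ x : E, ProgMeasurable F fun t ω => z x ω t) ∧
      ∀ t : ℝ≥0, ∀ᵐ ω ∂P, Z t ω = z (L ω) ω t := by
  have hfactor (n k : ℕ) : ∃ g : E × Ω → ℝ,
      Measurable[(inferInstance : MeasurableSpace E).prod (F (dyadicPoint n k + dyadicMesh n))] g ∧
      ∀ ω, Z (dyadicPoint n k) ω = g (L ω, ω) :=
    exists_eq_comp_prodMk_of_measurable_sup_comap
      ((hZ_adapted _).mono (iInf₂_le _ (dyadicMesh_pos n)) le_rfl)
  choose g hg hZg using hfactor
  refine ⟨fun x ω t => dyadicLimsup g t (x, ω), ?_, fun x => ?_, fun t => ae_of_all P fun ω => ?_⟩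
  · have hg' (n k : ℕ) : Measurable (g n k) :=
      (hg n k).comp (measurable_fst.prodMk ((measurable_id'' (F.le _)).comp measurable_snd))
    exact (measurable_dyadicLimsup hg').comp (f := fun p : E × Ω × ℝ≥0 => (p.2.2, (p.1, p.2.1)))
      (measurable_snd.snd.prodMk (measurable_fst.prodMk measurable_snd.fst))
  · exact (isProgressive_dyadicLimsup (w := fun n k ω => g n k (x, ω)) hF_rc
      fun n k => (hg n k).comp (measurable_const.prodMk measurable_id)).isStronglyProgressive
  · simp only [dyadicLimsup, ← hZg]
    exact (((hZ_rc ω t).tendsto.comp (tendsto_dyadicPoint_dyadicIndex t)).limsup_eq).symm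

/-- Every right-continuous `G`-adapted process `Z` is of the form
`Z_t = z^L_t` `P`-a.s., for a jointly measurable family `z` with `(z^x_t)` being
`F`-progressively measurable for every `x`. -/
theorem G_adapted_process_parametrization
    {Ω : Type*} {mΩ : MeasurableSpace Ω} {P : Measure Ω} [IsProbabilityMeasure P]
    {E : Type*} [MeasurableSpace E] [StandardBorelSpace E]
    (F : Filtration ℝ≥0 mΩ)
    (hF_rc : ∀ t : ℝ≥0, F t = ⨅ (ε : ℝ≥0) (_ : 0 < ε), F (t + ε))
    (L : Ω → E) (hL : Measurable L)
    (lam : Measure E) (hlam : P.map L = lam)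
    (ν : ℝ≥0 → Ω → Measure E)
    (hν_prob : ∀ (t : ℝ≥0) (ω : Ω), IsProbabilityMeasure (ν t ω))
    (hν_meas : ∀ (t : ℝ≥0) (B : Set E), MeasurableSet B →
      Measurable[F t] fun ω => ν t ω B)
    (hν_cond : ∀ (t : ℝ≥0) (B : Set E), MeasurableSet B →
      ∀ A : Set Ω, MeasurableSet[F t] A →
        ∫⁻ ω in A, ν t ω B ∂P = P (A ∩ L ⁻¹' B))
    (hF_complete : ∀ (t : ℝ≥0) (s : Set Ω), P s = 0 → MeasurableSet[F t] s)
    (hJacod : ∀ t : ℝ≥0, ∀ᵐ ω ∂P, ν t ω ≪ lam)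
    (Z : ℝ≥0 → Ω → ℝ)
    (hZ_adapted : ∀ t : ℝ≥0,
      Measurable[⨅ (ε : ℝ≥0) (_ : 0 < ε),
        (F (t + ε) ⊔ MeasurableSpace.comap L inferInstance)] (Z t))
    (hZ_rc : ∀ (ω : Ω) (t : ℝ≥0),
      ContinuousWithinAt (fun s => Z s ω) (Set.Ici t) t) :
    ∃ z : E → Ω → ℝ≥0 → ℝ,
      Measurable (fun p : E × Ω × ℝ≥0 => z p.1 p.2.1 p.2.2) ∧
      (∀ x : E, ProgMeasurable F fun t ω => z x ω t) ∧
      ∀ t : ℝ≥0, ∀ᵐ ω ∂P, Z t ω = z (L ω) ω t :=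
  G_adapted_process_parametrization_general F hF_rc L Z hZ_adapted hZ_rc
end

section
/- Let q be a density family for L, and let m : E × Ω × [0,∞) → ℝ be a jointly measurable function such that for every t ≥ 0 the map (x,ω) ↦ m^x_t(ω) is (B_E ⊗ F_t)-measurable, and for every x ∈ E the process (m^x_t q^x_t)_{t≥0} is a martingale on (Ω, F, P). If for every t ≥ 0 the random variable M_t := m^{L}_t is integrable, then the process M = (M_t)_{t≥0} is a martingale with respect to the filtration G⁰ (G⁰_t = F_t ⊔ σ(L)) on (Ω, P). -/
open MeasureTheory Set
open scoped ENNReal NNReal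

/-- The initially enlarged filtration `G⁰_t = F_t ⊔ σ(L)`. -/
noncomputable def initialEnlargement {Ω E : Type*} {mΩ : MeasurableSpace Ω}
    [MeasurableSpace E] (F : Filtration ℝ≥0 mΩ) (L : Ω → E) (hL : Measurable L) :
    Filtration ℝ≥0 mΩ where
  seq t := F t ⊔ MeasurableSpace.comap L inferInstance
  mono' s t hst := sup_le_sup_right (F.mono hst) _
  le' t := sup_le (F.le t) hL.comap_le

/-
Write `Φ ω = (L ω, ω)`. The density hypothesis says that, on the σ-algebra `B_E ⊗ F_t`, the law of
`Φ` under `P` is `λ ⊗ P` with density `q_t`: both measures give `P(L ∈ B, A)` to a rectangle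
`B × A`, and rectangles form a π-system. Since `G⁰_t = Φ⁻¹(B_E ⊗ F_t)`, every `G⁰_s`-set is
`Φ⁻¹ T` with `T ∈ B_E ⊗ F_s`, and then
`∫_{Φ⁻¹ T} M_t dP = ∫ (∫_{T_x} m^x_t q^x_t dP) λ(dx)`
for `t ≥ s`. The section `T_x` lies in `F_s`, so the inner integral does not depend on `t ≥ s`
by the martingale property of `m^x q^x`.
-/

section

variable {Ω E : Type*} {𝓕 mΩ : MeasurableSpace Ω} [mE : MeasurableSpace E]

lemma MeasurableSpace.prod_mono_right_s8 {m₁ m₂ : MeasurableSpace Ω} (h : m₁ ≤ m₂) :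
    mE.prod m₁ ≤ mE.prod m₂ :=
  sup_le_sup_left (MeasurableSpace.comap_mono h) _

lemma initialEnlargement_eq_comap (F : Filtration ℝ≥0 mΩ) {L : Ω → E} (hL : Measurable L)
    (t : ℝ≥0) : initialEnlargement F L hL t = (mE.prod (F t)).comap fun ω => (L ω, ω) := by
  rw [MeasurableSpace.comap_prodMk, sup_comm]
  exact congrArg (· ⊔ _) MeasurableSpace.comap_id.symm

variable {P : Measure Ω} {lam : Measure E} {L : Ω → E}

lemma setLIntegral_density_eq_measure_inter {ν : Ω → Measure E} {f : E × Ω → ℝ≥0∞}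
    (hν_cond : ∀ B, MeasurableSet B → ∀ A, MeasurableSet[𝓕] A →
      ∫⁻ ω in A, ν ω B ∂P = P (A ∩ L ⁻¹' B))
    (hν_dens : ∀ᵐ ω ∂P, ∀ B, MeasurableSet B → ν ω B = ∫⁻ x in B, f (x, ω) ∂lam)
    {B : Set E} (hB : MeasurableSet B) {A : Set Ω} (hA : MeasurableSet[𝓕] A) :
    ∫⁻ ω in A, ∫⁻ x in B, f (x, ω) ∂lam ∂P = P (L ⁻¹' B ∩ A) := by
  rw [inter_comm, ← hν_cond B hB A hA]
  refine lintegral_congr_ae (ae_restrict_of_ae ?_)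
  filter_upwards [hν_dens] with ω hω using (hω B hB).symm

lemma trim_map_prodMk_eq_trim_withDensity [IsFiniteMeasure P] [SFinite lam] {f : E × Ω → ℝ≥0∞}
    (hL : Measurable L) (h𝓕 : 𝓕 ≤ mΩ)
    (hf : Measurable f)
    (hdens : ∀ B, MeasurableSet B → ∀ A, MeasurableSet[𝓕] A →
      ∫⁻ ω in A, ∫⁻ x in B, f (x, ω) ∂lam ∂P = P (L ⁻¹' B ∩ A)) :
    (P.map fun ω => (L ω, ω)).trim (MeasurableSpace.prod_mono_right_s8 h𝓕) =
      ((lam.prod P).withDensity f).trim (MeasurableSpace.prod_mono_right_s8 h𝓕) := by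
  have hΦ : Measurable fun ω => (L ω, ω) := hL.prodMk measurable_id
  have hrect : ∀ B, MeasurableSet B → ∀ A, MeasurableSet[𝓕] A →
      P.map (fun ω => (L ω, ω)) (B ×ˢ A) = (lam.prod P).withDensity f (B ×ˢ A) := by
    intro B hB A hA
    have hBA : MeasurableSet (B ×ˢ A) := hB.prod (h𝓕 A hA)
    rw [Measure.map_apply hΦ hBA, mk_preimage_prod, withDensity_apply _ hBA,
      ← Measure.prod_restrict, lintegral_prod_symm' _ hf, hdens B hB A hA]
    rfl
  refine ext_of_generate_finite _ (@generateFrom_prod E Ω _ 𝓕).symm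
    (@isPiSystem_prod E Ω _ 𝓕) ?_ ?_
  · rintro _ ⟨B, hB, A, hA, rfl⟩
    have hBA : MeasurableSet[mE.prod 𝓕] (B ×ˢ A) := hB.prod hA
    rw [trim_measurableSet_eq _ hBA, trim_measurableSet_eq _ hBA, hrect B hB A hA]
  · rw [trim_measurableSet_eq _ MeasurableSet.univ, trim_measurableSet_eq _ MeasurableSet.univ,
      ← univ_prod_univ, hrect _ MeasurableSet.univ _ MeasurableSet.univ]

variable {q : E × Ω → ℝ} {g : E × Ω → ℝ}

lemma integral_comp_prodMk_eq_integral_mul (hL : Measurable L) (h𝓕 : 𝓕 ≤ mΩ)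
    (hq : Measurable q) (hq0 : ∀ p, 0 ≤ q p)
    (hlaw : (P.map fun ω => (L ω, ω)).trim (MeasurableSpace.prod_mono_right_s8 h𝓕) =
      ((lam.prod P).withDensity fun p => ENNReal.ofReal (q p)).trim
        (MeasurableSpace.prod_mono_right_s8 h𝓕))
    (hg : StronglyMeasurable[mE.prod 𝓕] g) :
    ∫ ω, g (L ω, ω) ∂P = ∫ p, q p * g p ∂(lam.prod P) := calc
  ∫ ω, g (L ω, ω) ∂P = ∫ p, g p ∂(P.map fun ω => (L ω, ω)) :=
    (integral_map (hL.prodMk measurable_id).aemeasurable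
      (hg.mono (MeasurableSpace.prod_mono_right_s8 h𝓕)).aestronglyMeasurable).symm
  _ = ∫ p, g p ∂((lam.prod P).withDensity fun p => ENNReal.ofReal (q p)) := by
    rw [integral_trim (MeasurableSpace.prod_mono_right_s8 h𝓕) hg, hlaw, ← integral_trim _ hg]
  _ = ∫ p, q p * g p ∂(lam.prod P) := by
    rw [integral_withDensity_eq_integral_toReal_smul hq.ennreal_ofReal
      (ae_of_all _ fun _ => ENNReal.ofReal_lt_top)]
    simp only [ENNReal.toReal_ofReal (hq0 _), smul_eq_mul]

lemma integrable_mul_of_integrable_comp_prodMk (hL : Measurable L) (h𝓕 : 𝓕 ≤ mΩ)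
    (hq : Measurable q) (hq0 : ∀ p, 0 ≤ q p)
    (hlaw : (P.map fun ω => (L ω, ω)).trim (MeasurableSpace.prod_mono_right_s8 h𝓕) =
      ((lam.prod P).withDensity fun p => ENNReal.ofReal (q p)).trim
        (MeasurableSpace.prod_mono_right_s8 h𝓕))
    (hg : StronglyMeasurable[mE.prod 𝓕] g) (hgi : Integrable (fun ω => g (L ω, ω)) P) :
    Integrable (fun p => q p * g p) (lam.prod P) := by
  have hmap : Integrable g (P.map fun ω => (L ω, ω)) :=
    (integrable_map_measure (hg.mono (MeasurableSpace.prod_mono_right_s8 h𝓕)).aestronglyMeasurable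
      (hL.prodMk measurable_id).aemeasurable).2 hgi
  have hdens : Integrable g ((lam.prod P).withDensity fun p => ENNReal.ofReal (q p)) :=
    integrable_of_integrable_trim _ (hlaw ▸ hmap.trim _ hg)
  simpa only [ENNReal.toReal_ofReal (hq0 _), smul_eq_mul] using
    (integrable_withDensity_iff_integrable_smul' hq.ennreal_ofReal
      (ae_of_all _ fun _ => ENNReal.ofReal_lt_top)).1 hdens

lemma setIntegral_preimage_prodMk_eq_integral_setIntegral [SFinite P] [SFinite lam]
    (hL : Measurable L) (h𝓕 : 𝓕 ≤ mΩ) (hq : Measurable q) (hq0 : ∀ p, 0 ≤ q p)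
    (hlaw : (P.map fun ω => (L ω, ω)).trim (MeasurableSpace.prod_mono_right_s8 h𝓕) =
      ((lam.prod P).withDensity fun p => ENNReal.ofReal (q p)).trim
        (MeasurableSpace.prod_mono_right_s8 h𝓕))
    (hg : StronglyMeasurable[mE.prod 𝓕] g) (hgi : Integrable (fun ω => g (L ω, ω)) P)
    {T : Set (E × Ω)} (hT : MeasurableSet[mE.prod 𝓕] T) :
    ∫ ω in (fun ω => (L ω, ω)) ⁻¹' T, g (L ω, ω) ∂P =
      ∫ x, ∫ ω in Prod.mk x ⁻¹' T, g (x, ω) * q (x, ω) ∂P ∂lam := by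
  have hT' : MeasurableSet T := MeasurableSpace.prod_mono_right_s8 h𝓕 T hT
  have hΦT : MeasurableSet ((fun ω => (L ω, ω)) ⁻¹' T) := (hL.prodMk measurable_id) hT'
  have hcomp : (fun ω => T.indicator g (L ω, ω)) =
      ((fun ω => (L ω, ω)) ⁻¹' T).indicator fun ω => g (L ω, ω) :=
    funext fun _ => (indicator_comp_right _).symm
  have hTg : StronglyMeasurable[mE.prod 𝓕] (T.indicator g) := hg.indicator hT
  calc ∫ ω in (fun ω => (L ω, ω)) ⁻¹' T, g (L ω, ω) ∂P
      = ∫ ω, T.indicator g (L ω, ω) ∂P := by rw [hcomp, integral_indicator hΦT]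
    _ = ∫ p, q p * T.indicator g p ∂(lam.prod P) :=
      integral_comp_prodMk_eq_integral_mul hL h𝓕 hq hq0 hlaw hTg
    _ = ∫ x, ∫ ω, q (x, ω) * T.indicator g (x, ω) ∂P ∂lam :=
      integral_prod _ (integrable_mul_of_integrable_comp_prodMk hL h𝓕 hq hq0 hlaw hTg
        (hcomp ▸ hgi.indicator hΦT))
    _ = ∫ x, ∫ ω in Prod.mk x ⁻¹' T, g (x, ω) * q (x, ω) ∂P ∂lam := by
      congr 1 with x
      rw [← integral_indicator (measurable_prodMk_left hT')]
      congr 1 with ω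
      by_cases hω : (x, ω) ∈ T <;> simp [hω, mul_comm]

end

theorem martingale_initialEnlargement_of_parametrized_general
    {Ω : Type*} {mΩ : MeasurableSpace Ω} {P : Measure Ω} [IsProbabilityMeasure P]
    {E : Type*} [MeasurableSpace E]
    (F : Filtration ℝ≥0 mΩ)
    (L : Ω → E) (hL : Measurable L)
    (lam : Measure E) (hlam : P.map L = lam)
    (ν : ℝ≥0 → Ω → Measure E)
    (hν_cond : ∀ (t : ℝ≥0) (B : Set E), MeasurableSet B →
      ∀ A : Set Ω, MeasurableSet[F t] A →
        ∫⁻ ω in A, ν t ω B ∂P = P (A ∩ L ⁻¹' B))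
    (q : E → Ω → ℝ≥0 → ℝ)
    (hq_meas : Measurable fun p : E × Ω × ℝ≥0 => q p.1 p.2.1 p.2.2)
    (hq_nonneg : ∀ x ω t, 0 ≤ q x ω t)
    (hq_dens : ∀ t : ℝ≥0, ∀ᵐ ω ∂P, ∀ B : Set E, MeasurableSet B →
      ν t ω B = ∫⁻ x in B, ENNReal.ofReal (q x ω t) ∂lam)
    (m : E → Ω → ℝ≥0 → ℝ)
    (hm_meas_t : ∀ t : ℝ≥0, Measurable[(inferInstance : MeasurableSpace E).prod (F t)]
      fun p : E × Ω => m p.1 p.2 t)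
    (hm_mart : ∀ x : E, Martingale (fun t ω => m x ω t * q x ω t) F P)
    (hm_int : ∀ t : ℝ≥0, Integrable (fun ω => m (L ω) ω t) P) :
    Martingale (fun t ω => m (L ω) ω t) (initialEnlargement F L hL) P := by
  have : IsFiniteMeasure lam := hlam ▸ inferInstance
  have hq_t (t : ℝ≥0) : Measurable fun p : E × Ω => q p.1 p.2 t :=
    hq_meas.comp (measurable_fst.prodMk (measurable_snd.prodMk measurable_const))
  have hsetInt (t : ℝ≥0) {T : Set (E × Ω)} (hT : MeasurableSet[‹MeasurableSpace E›.prod (F t)] T) :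
      ∫ ω in (fun ω => (L ω, ω)) ⁻¹' T, m (L ω) ω t ∂P =
        ∫ x, ∫ ω in Prod.mk x ⁻¹' T, m x ω t * q x ω t ∂P ∂lam :=
    setIntegral_preimage_prodMk_eq_integral_setIntegral hL (F.le t) (hq_t t)
      (fun _ => hq_nonneg _ _ t)
      (trim_map_prodMk_eq_trim_withDensity hL (F.le t) (hq_t t).ennreal_ofReal
        fun _ hB _ hA => setLIntegral_density_eq_measure_inter
          (f := fun p => ENNReal.ofReal (q p.1 p.2 t)) (hν_cond t) (hq_dens t) hB hA)
      (hm_meas_t t).stronglyMeasurable (hm_int t) hT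
  have hadapted : StronglyAdapted (initialEnlargement F L hL) fun t ω => m (L ω) ω t :=
    fun t => ((hm_meas_t t).comp
      (Measurable.of_comap_le (initialEnlargement_eq_comap F hL t).ge)).stronglyMeasurable
  refine ⟨hadapted, fun s t hst => (ae_eq_condExp_of_forall_setIntegral_eq _ (hm_int t)
    (fun _ _ _ => (hm_int s).integrableOn) ?_ (hadapted s).aestronglyMeasurable).symm⟩
  rintro _ hS -
  rw [initialEnlargement_eq_comap] at hS
  obtain ⟨T, hT, rfl⟩ := hS
  rw [hsetInt s hT, hsetInt t (MeasurableSpace.prod_mono_right_s8 (F.mono hst) T hT)]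
  exact integral_congr_ae (ae_of_all _ fun x =>
    (hm_mart x).setIntegral_eq hst (measurable_prodMk_left hT))

/-- If `(m^x q^x)` is an `F`-martingale for every `x` and `m^L_t` is
integrable for every `t`, then `M_t = m^L_t` is a martingale for the initially enlarged
filtration `G⁰`. -/
theorem martingale_initialEnlargement_of_parametrized
    {Ω : Type*} {mΩ : MeasurableSpace Ω} {P : Measure Ω} [IsProbabilityMeasure P]
    {E : Type*} [MeasurableSpace E] [StandardBorelSpace E]
    (F : Filtration ℝ≥0 mΩ)
    (hF_rc : ∀ t : ℝ≥0, F t = ⨅ (ε : ℝ≥0) (_ : 0 < ε), F (t + ε))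
    (L : Ω → E) (hL : Measurable L)
    (lam : Measure E) (hlam : P.map L = lam)
    (ν : ℝ≥0 → Ω → Measure E)
    (hν_prob : ∀ (t : ℝ≥0) (ω : Ω), IsProbabilityMeasure (ν t ω))
    (hν_meas : ∀ (t : ℝ≥0) (B : Set E), MeasurableSet B →
      Measurable[F t] fun ω => ν t ω B)
    (hν_cond : ∀ (t : ℝ≥0) (B : Set E), MeasurableSet B →
      ∀ A : Set Ω, MeasurableSet[F t] A →
        ∫⁻ ω in A, ν t ω B ∂P = P (A ∩ L ⁻¹' B))
    (q : E → Ω → ℝ≥0 → ℝ)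
    (hq_meas : Measurable fun p : E × Ω × ℝ≥0 => q p.1 p.2.1 p.2.2)
    (hq_nonneg : ∀ x ω t, 0 ≤ q x ω t)
    (hq_rc : ∀ (x : E) (ω : Ω) (t : ℝ≥0),
      ContinuousWithinAt (fun s => q x ω s) (Set.Ici t) t)
    (hq_mart : ∀ x : E, Martingale (fun t ω => q x ω t) F P)
    (hq_dens : ∀ t : ℝ≥0, ∀ᵐ ω ∂P, ∀ B : Set E, MeasurableSet B →
      ν t ω B = ∫⁻ x in B, ENNReal.ofReal (q x ω t) ∂lam)
    (m : E → Ω → ℝ≥0 → ℝ)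
    (hm_meas : Measurable fun p : E × Ω × ℝ≥0 => m p.1 p.2.1 p.2.2)
    (hm_meas_t : ∀ t : ℝ≥0, Measurable[(inferInstance : MeasurableSpace E).prod (F t)]
      fun p : E × Ω => m p.1 p.2 t)
    (hm_mart : ∀ x : E, Martingale (fun t ω => m x ω t * q x ω t) F P)
    (hm_int : ∀ t : ℝ≥0, Integrable (fun ω => m (L ω) ω t) P) :
    Martingale (fun t ω => m (L ω) ω t) (initialEnlargement F L hL) P :=
  martingale_initialEnlargement_of_parametrized_general F L hL lam hlam ν hν_cond q hq_meas
    hq_nonneg hq_dens m hm_meas_t hm_mart hm_int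
end

section
/- Let m : E × Ω × [0,∞) → ℝ be a jointly measurable function such that for every t ≥ 0 the map (x,ω) ↦ m^x_t(ω) is (B_E ⊗ F_t)-measurable, for every x ∈ E the process (m^x_t)_{t≥0} is a martingale on (Ω, F, P), and ∫_E E[|m^x_t|] λ(dx) < ∞ for every t ≥ 0. Then the process μ = (μ_t)_{t≥0} on the product space, defined by μ_t(x,ω) := m^x_t(ω), is a martingale on (Ω̂, F̂, P̂). -/
open MeasureTheory Set
open scoped ENNReal NNReal

/-!
For `A ∈ F̂_s` every section `{ω | (x, ω) ∈ A}` lies in `⋂_{ε>0} F_{s+ε} = F_s`, so Fubini turns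
`∫_A μ_t d(λ ⊗ P)` into `∫_E ∫_{A_x} m^x_t dP dλ(x)`, and the martingale property of each `m^x`
shows that the inner integral does not depend on `t ≥ s`. This characterises `μ_s` as the
conditional expectation of `μ_t` given `F̂_s`.
-/

/-- The product filtration `F̂_t = ⋂_{ε>0} (B_E ⊗ F_{t+ε})` on `Ω̂ = E × Ω`. -/
noncomputable def prodFiltration {Ω E : Type*} {mΩ : MeasurableSpace Ω}
    [mE : MeasurableSpace E] (F : Filtration ℝ≥0 mΩ) :
    Filtration ℝ≥0 (inferInstance : MeasurableSpace (E × Ω)) where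
  seq t := ⨅ (ε : ℝ≥0) (_ : 0 < ε), mE.prod (F (t + ε))
  mono' s t hst := le_iInf₂ fun ε hε => (iInf₂_le ε hε).trans
    (sup_le_sup le_rfl (MeasurableSpace.comap_mono (F.mono (add_le_add hst le_rfl))))
  le' t := (iInf₂_le 1 one_pos).trans
    (sup_le_sup le_rfl (MeasurableSpace.comap_mono (F.le _)))

section ProdSections

variable {E Ω X : Type*} [MeasurableSpace E] {mΩ : MeasurableSpace Ω} [NormedAddCommGroup X]
  {μ : Measure E} {ν : Measure Ω}

theorem integrable_prod_of_lintegral_lintegral_enorm_lt_top [SFinite ν] {f : E × Ω → X}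
    (hf : AEStronglyMeasurable f (μ.prod ν)) (h : ∫⁻ x, ∫⁻ y, ‖f (x, y)‖ₑ ∂ν ∂μ < ∞) :
    Integrable f (μ.prod ν) :=
  ⟨hf, by rwa [HasFiniteIntegral, lintegral_prod _ hf.enorm]⟩

variable [NormedSpace ℝ X]

theorem setIntegral_prod_eq_integral_setIntegral_preimage_prodMk [SFinite μ] [SFinite ν]
    {f : E × Ω → X} (hf : Integrable f (μ.prod ν)) {A : Set (E × Ω)} (hA : MeasurableSet A) :
    ∫ p in A, f p ∂(μ.prod ν) = ∫ x, ∫ y in Prod.mk x ⁻¹' A, f (x, y) ∂ν ∂μ := by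
  rw [← integral_indicator hA, integral_prod _ (hf.indicator hA)]
  congr 1 with x
  rw [← integral_indicator (measurable_prodMk_left hA)]
  rfl

variable [CompleteSpace X]

theorem martingale_prod_of_ae_martingale_sections {ι : Type*} [Preorder ι]
    [IsFiniteMeasure μ] [IsFiniteMeasure ν] {F : Filtration ι mΩ}
    {G : Filtration ι (inferInstance : MeasurableSpace (E × Ω))} {f : ι → E × Ω → X}
    (hadapted : StronglyAdapted G f) (hint : ∀ t, Integrable (f t) (μ.prod ν))
    (hsection : ∀ s A x, MeasurableSet[G s] A → MeasurableSet[F s] (Prod.mk x ⁻¹' A))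
    (hmart : ∀ᵐ x ∂μ, Martingale (fun t y => f t (x, y)) F ν) :
    Martingale f G (μ.prod ν) := by
  refine ⟨hadapted, fun s t hst => ?_⟩
  have hsetIntegral : ∀ A, MeasurableSet[G s] A →
      ∫ p in A, f s p ∂(μ.prod ν) = ∫ p in A, f t p ∂(μ.prod ν) := by
    intro A hA
    rw [setIntegral_prod_eq_integral_setIntegral_preimage_prodMk (hint s) (G.le s A hA),
      setIntegral_prod_eq_integral_setIntegral_preimage_prodMk (hint t) (G.le s A hA)]
    refine integral_congr_ae (hmart.mono fun x hx => ?_)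
    exact hx.setIntegral_eq hst (hsection s A x hA)
  exact (ae_eq_condExp_of_forall_setIntegral_eq (G.le s) (hint t)
    (fun A _ _ => (hint s).integrableOn) (fun A hA _ => hsetIntegral A hA)
    (hadapted s).aestronglyMeasurable).symm

end ProdSections

section ProdFiltration

open MeasurableSpace

variable {Ω E : Type*} {mΩ : MeasurableSpace Ω} [mE : MeasurableSpace E]

theorem prod_le_prodFiltration (F : Filtration ℝ≥0 mΩ) (t : ℝ≥0) :
    mE.prod (F t) ≤ prodFiltration F t :=
  le_iInf₂ fun _ _ => sup_le_sup le_rfl (comap_mono (F.mono le_self_add))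

theorem measurableSet_preimage_prodMk_of_prodFiltration {F : Filtration ℝ≥0 mΩ} {t : ℝ≥0}
    (hF : F t = ⨅ (ε : ℝ≥0) (_ : 0 < ε), F (t + ε)) {A : Set (E × Ω)}
    (hA : MeasurableSet[prodFiltration F t] A) (x : E) :
    MeasurableSet[F t] (Prod.mk x ⁻¹' A) := by
  rw [hF]
  refine measurableSet_iInf.2 fun ε => measurableSet_iInf.2 fun hε => ?_
  exact measurable_prodMk_left (measurableSet_iInf.1 (measurableSet_iInf.1 hA ε) hε)

end ProdFiltration

theorem prod_martingale_of_parametrized_martingales_general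
    {Ω : Type*} {mΩ : MeasurableSpace Ω} {P : Measure Ω} [IsProbabilityMeasure P]
    {E : Type*} [mE : MeasurableSpace E]
    (F : Filtration ℝ≥0 mΩ)
    (hF_rc : ∀ t : ℝ≥0, F t = ⨅ (ε : ℝ≥0) (_ : 0 < ε), F (t + ε))
    (lam : Measure E) [IsProbabilityMeasure lam]
    (m : E → Ω → ℝ≥0 → ℝ)
    (hm_meas_t : ∀ t : ℝ≥0, Measurable[mE.prod (F t)] fun p : E × Ω => m p.1 p.2 t)
    (hm_mart : ∀ x : E, Martingale (fun t ω => m x ω t) F P)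
    (hm_int : ∀ t : ℝ≥0, ∫⁻ x, ∫⁻ ω, ENNReal.ofReal |m x ω t| ∂P ∂lam < ⊤) :
    Martingale (fun (t : ℝ≥0) (p : E × Ω) => m p.1 p.2 t) (prodFiltration F)
      (lam.prod P) := by
  have hadapted : StronglyAdapted (prodFiltration F) fun t (p : E × Ω) => m p.1 p.2 t := fun t =>
    ((hm_meas_t t).mono (prod_le_prodFiltration F t) le_rfl).stronglyMeasurable
  refine martingale_prod_of_ae_martingale_sections hadapted (fun t => ?_)
    (fun s A x hA => measurableSet_preimage_prodMk_of_prodFiltration (hF_rc s) hA x)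
    (ae_of_all _ hm_mart)
  refine integrable_prod_of_lintegral_lintegral_enorm_lt_top
    ((hadapted t).mono ((prodFiltration F).le t)).aestronglyMeasurable ?_
  simpa only [Real.enorm_eq_ofReal_abs] using hm_int t

/-- A parameterized family of `F`-martingales `(m^x)_{x ∈ E}` with
`(B_E ⊗ F_t)`-measurable sections and finite mixed first moments defines a martingale
`μ_t(x,ω) := m^x_t(ω)` on the product space `(Ω̂, F̂, P̂)`. -/
theorem prod_martingale_of_parametrized_martingales
    {Ω : Type*} {mΩ : MeasurableSpace Ω} {P : Measure Ω} [IsProbabilityMeasure P]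
    {E : Type*} [mE : MeasurableSpace E] [StandardBorelSpace E]
    (F : Filtration ℝ≥0 mΩ)
    (hF_rc : ∀ t : ℝ≥0, F t = ⨅ (ε : ℝ≥0) (_ : 0 < ε), F (t + ε))
    (lam : Measure E) [IsProbabilityMeasure lam]
    (m : E → Ω → ℝ≥0 → ℝ)
    (hm_meas : Measurable fun p : E × Ω × ℝ≥0 => m p.1 p.2.1 p.2.2)
    (hm_meas_t : ∀ t : ℝ≥0, Measurable[mE.prod (F t)] fun p : E × Ω => m p.1 p.2 t)
    (hm_mart : ∀ x : E, Martingale (fun t ω => m x ω t) F P)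
    (hm_int : ∀ t : ℝ≥0, ∫⁻ x, ∫⁻ ω, ENNReal.ofReal |m x ω t| ∂P ∂lam < ⊤) :
    Martingale (fun (t : ℝ≥0) (p : E × Ω) => m p.1 p.2 t) (prodFiltration F)
      (lam.prod P) :=
  prod_martingale_of_parametrized_martingales_general (mE := mE) F hF_rc lam m hm_meas_t hm_mart
    hm_int
end
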